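/- arXiv:2210.11031 — 2 statements merged into one kernel-verified Lean document; each statement's English description precedes it below -/
import Mathlib

section
/- Let θ₀ ∈ (0, π/6), β ∈ (0,1), and c > 0. If ψ is subharmonic on the open unit disc 𝔻 ⊂ ℂ with sup_𝔻 ψ ≤ c and limsup_{z→e^{iθ}} ψ(z) ≤ c|θ|^β for all θ ∈ (−θ₀, θ₀), then there is a constant C depending only on (θ₀, β, c) such that ψ(z) ≤ C|1−z|^β for all z ∈ 𝔻. -/
/-!
`Re (1 - z)^β` is harmonic on the disc and, as `1 - z` lies in the right half-plane,
`cos (βπ/2) |1 - z|^β ≤ Re (1 - z)^β ≤ |1 - z|^β`. On `Ω = 𝔻 ∩ B(1, δ)` with `δ = θ₀ / 2`, a large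
multiple `A Re (1 - z)^β` dominates `ψ` at the boundary: on the arc of the unit circle by the
boundary hypothesis together with `|θ| ≤ (π/2) |1 - e^{iθ}|`, and on the arc `|1 - z| = δ` by
`ψ ≤ c`. The maximum principle for `ψ - A Re (1 - z)^β` gives `ψ ≤ A |1 - z|^β` on `Ω`, while
`ψ ≤ c ≤ (c / δ^β) |1 - z|^β` off `Ω`.
-/

noncomputable section
open Complex MeasureTheory Filter Metric Set Real

/-- The mean of `f` over the circle of center `z` and radius `r`. -/
def circleMean (f : ℂ → ℝ) (z : ℂ) (r : ℝ) : ℝ :=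
  (2 * π)⁻¹ * ∫ θ in (0:ℝ)..(2 * π), f (z + r * Complex.exp (θ * Complex.I))

/-- Subharmonicity on an open set, via upper semicontinuity and the sub-mean value
inequality on circles. -/
def SubharmonicOn (f : ℂ → ℝ) (U : Set ℂ) : Prop :=
  UpperSemicontinuousOn f U ∧
    ∀ z ∈ U, ∀ r : ℝ, 0 < r → closedBall z r ⊆ U → f z ≤ circleMean f z r

open scoped Topology

theorem circleMean_eq_circleAverage (f : ℂ → ℝ) (z : ℂ) (r : ℝ) :
    circleMean f z r = circleAverage f z r :=
  rfl

theorem circleMean_const_mul (a : ℝ) (f : ℂ → ℝ) (z : ℂ) (r : ℝ) :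
    circleMean (fun w => a * f w) z r = a * circleMean f z r := by
  rw [circleMean, circleMean, intervalIntegral.integral_const_mul, mul_left_comm]

theorem SubharmonicOn.mono {f : ℂ → ℝ} {U V : Set ℂ} (hf : SubharmonicOn f U) (hVU : V ⊆ U) :
    SubharmonicOn f V :=
  ⟨hf.1.mono hVU, fun z hz r hr hball => hf.2 z (hVU hz) r hr (hball.trans hVU)⟩

/-- `circleMean` is `0` over circles where `f` is not integrable, so there the sub-mean value
inequality only says `f z ≤ 0`; the sign of `h` keeps this true for `f - h`. -/
theorem SubharmonicOn.sub {f h : ℂ → ℝ} {U : Set ℂ} (hf : SubharmonicOn f U)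
    (hcont : ContinuousOn h U)
    (hmean : ∀ z r, 0 < r → closedBall z r ⊆ U → circleMean h z r = h z)
    (hnonneg : ∀ z ∈ U, 0 ≤ h z) : SubharmonicOn (f - h) U := by
  refine ⟨hf.1.add hcont.neg.upperSemicontinuousOn, fun z hz r hr hball => ?_⟩
  have hsub := hf.2 z hz r hr hball
  have hh : CircleIntegrable h z r :=
    (hcont.mono ((abs_of_pos hr).symm ▸ sphere_subset_closedBall.trans hball)).circleIntegrable'
  rw [circleMean_eq_circleAverage] at hsub ⊢
  by_cases hfi : CircleIntegrable f z r
  · rw [circleAverage_sub hfi hh, ← circleMean_eq_circleAverage h, hmean z r hr hball]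
    exact sub_le_sub_right hsub _
  · have hfhi : ¬CircleIntegrable (f - h) z r := fun hfh => hfi (by simpa using hfh.add hh)
    rw [circleAverage.integral_undef hfi] at hsub
    rw [circleAverage.integral_undef hfhi, Pi.sub_apply]
    linarith [hnonneg z hz]

theorem circleMean_re_of_differentiableOn {F : ℂ → ℂ} {U : Set ℂ} (hF : DifferentiableOn ℂ F U)
    {y : ℂ} {r : ℝ} (hr : 0 < r) (hball : closedBall y r ⊆ U) :
    circleMean (fun z => (F z).re) y r = (F y).re := by
  have hFcl : DiffContOnCl ℂ F (ball y |r|) := by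
    rw [abs_of_pos hr]
    exact (hF.mono ((closure_ball y hr.ne').symm ▸ hball)).diffContOnCl
  have hint : CircleIntegrable F y r :=
    (hFcl.continuousOn_ball.mono sphere_subset_closedBall).circleIntegrable'
  exact (reCLM.circleAverage_comp_comm hint).trans (congrArg re hFcl.circleAverage)

theorem re_cpow_ofReal_le_rpow (w : ℂ) (β : ℝ) : (w ^ (β : ℂ)).re ≤ ‖w‖ ^ β := by
  rw [cpow_ofReal_re]
  exact mul_le_of_le_one_right (rpow_nonneg (norm_nonneg w) β) (Real.cos_le_one _)

theorem cos_mul_rpow_le_re_cpow_ofReal {w : ℂ} (hw : 0 ≤ w.re) {β : ℝ} (hβ₀ : 0 ≤ β)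
    (hβ₂ : β ≤ 2) : Real.cos (β * π / 2) * ‖w‖ ^ β ≤ (w ^ (β : ℂ)).re := by
  have harg : |arg w * β| ≤ β * π / 2 := by
    rw [abs_mul, abs_of_nonneg hβ₀, mul_comm, mul_div_assoc]
    exact mul_le_mul_of_nonneg_left (abs_arg_le_pi_div_two_iff.2 hw) hβ₀
  have hcos : Real.cos (β * π / 2) ≤ Real.cos (arg w * β) := by
    rw [← Real.cos_abs (arg w * β)]
    exact Real.cos_le_cos_of_nonneg_of_le_pi (abs_nonneg _) (by nlinarith [pi_pos]) harg
  rw [cpow_ofReal_re, mul_comm]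
  exact mul_le_mul_of_nonneg_left hcos (rpow_nonneg (norm_nonneg w) β)

theorem re_one_sub_pos {z : ℂ} (hz : z ∈ ball (0 : ℂ) 1) : 0 < (1 - z).re := by
  rw [mem_ball_zero_iff] at hz
  rw [sub_re, one_re, sub_pos]
  exact (re_le_norm z).trans_lt hz

theorem differentiableOn_one_sub_cpow (β : ℂ) :
    DifferentiableOn ℂ (fun z : ℂ => (1 - z) ^ β) (ball 0 1) := fun _ hz =>
  ((differentiableAt_id.const_sub 1).cpow_const (Or.inl (re_one_sub_pos hz))).differentiableWithinAt

def holderBarrier (β : ℝ) (z : ℂ) : ℝ :=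
  ((1 - z) ^ (β : ℂ)).re

theorem continuousOn_holderBarrier (β : ℝ) : ContinuousOn (holderBarrier β) (ball 0 1) :=
  continuous_re.comp_continuousOn (differentiableOn_one_sub_cpow β).continuousOn

theorem circleMean_holderBarrier (β : ℝ) {y : ℂ} {r : ℝ} (hr : 0 < r)
    (hball : closedBall y r ⊆ ball 0 1) :
    circleMean (holderBarrier β) y r = holderBarrier β y :=
  circleMean_re_of_differentiableOn (differentiableOn_one_sub_cpow β) hr hball

theorem cos_mul_rpow_le_holderBarrier {β : ℝ} (hβ₀ : 0 ≤ β) (hβ₂ : β ≤ 2) {z : ℂ}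
    (hz : z ∈ ball (0 : ℂ) 1) : Real.cos (β * π / 2) * ‖1 - z‖ ^ β ≤ holderBarrier β z :=
  cos_mul_rpow_le_re_cpow_ofReal (re_one_sub_pos hz).le hβ₀ hβ₂

theorem holderBarrier_nonneg {β : ℝ} (hβ₀ : 0 ≤ β) (hβ₁ : β ≤ 1) {z : ℂ}
    (hz : z ∈ ball (0 : ℂ) 1) : 0 ≤ holderBarrier β z :=
  (mul_nonneg (cos_nonneg_of_mem_Icc ⟨by nlinarith [pi_pos], by nlinarith [pi_pos]⟩)
    (rpow_nonneg (norm_nonneg _) β)).trans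
    (cos_mul_rpow_le_holderBarrier hβ₀ (by linarith) hz)

theorem two_div_pi_mul_abs_le_norm_one_sub_exp {θ : ℝ} (hθ : |θ| ≤ π) :
    2 / π * |θ| ≤ ‖1 - exp (θ * I)‖ := by
  have hjordan := Real.mul_abs_le_abs_sin (x := θ / 2) (by rw [abs_div, abs_two]; linarith)
  rw [norm_sub_rev, mul_comm (θ : ℂ), norm_exp_I_mul_ofReal_sub_one, norm_mul,
    Real.norm_eq_abs, Real.norm_eq_abs, abs_two]
  rw [abs_div, abs_two] at hjordan
  linarith

theorem upperSemicontinuousOn_indicator_closure {α : Type*} [TopologicalSpace α] {u : α → ℝ}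
    {Ω : Set α} (hΩ : IsOpen Ω) (hu : UpperSemicontinuousOn u Ω)
    (hfr : ∀ ζ ∈ frontier Ω, ∀ ε > 0, ∀ᶠ w in 𝓝[Ω] ζ, u w < ε) :
    UpperSemicontinuousOn (Ω.indicator u) (closure Ω) := by
  intro ζ hζ y hy
  refine Filter.Eventually.filter_mono nhdsWithin_le_nhds ?_
  by_cases hζΩ : ζ ∈ Ω
  · rw [indicator_of_mem hζΩ] at hy
    have hlt := hu ζ hζΩ y hy
    rw [hΩ.nhdsWithin_eq hζΩ] at hlt
    filter_upwards [hlt, hΩ.mem_nhds hζΩ] with w hw hwΩ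
    rwa [indicator_of_mem hwΩ]
  · rw [indicator_of_notMem hζΩ] at hy
    have hfrζ : ζ ∈ frontier Ω := by rw [hΩ.frontier_eq]; exact ⟨hζ, hζΩ⟩
    filter_upwards [eventually_nhdsWithin_iff.1 (hfr ζ hfrζ y hy)] with w hw
    by_cases hwΩ : w ∈ Ω
    · rw [indicator_of_mem hwΩ]; exact hw hwΩ
    · rwa [indicator_of_notMem hwΩ]

/-- Positivity of the maximum rules out the junk value `0` of `circleMean`. -/
theorem SubharmonicOn.eq_of_isMaxOn {u : ℂ → ℝ} {Ω : Set ℂ} (hΩ : IsOpen Ω)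
    (hu : SubharmonicOn u Ω) {y : ℂ} (hy : y ∈ Ω) (hmax : IsMaxOn u Ω y) (hpos : 0 < u y)
    {r : ℝ} (hr : 0 < r) (hball : closedBall y r ⊆ Ω) (θ₀ : ℝ) :
    u (circleMap y r θ₀) = u y := by
  have hcirc : ∀ θ, circleMap y r θ ∈ Ω := fun θ =>
    hball (sphere_subset_closedBall (circleMap_mem_sphere y hr.le θ))
  refine le_antisymm (hmax (hcirc θ₀)) (not_lt.1 fun hlt => ?_)
  -- parametrize the circle so that `circleMap y r θ₀` sits at `θ = π`, inside `(0, 2π)`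
  set g : ℝ → ℝ := fun θ => u (circleMap y r (θ + (θ₀ - π)))
  have hmean := hu.2 y hy r hr hball
  rw [circleMean_eq_circleAverage, circleAverage_eq_integral_add (θ₀ - π), smul_eq_mul] at hmean
  by_cases hg : IntervalIntegrable g volume 0 (2 * π)
  · have hnear : ∀ᶠ θ in 𝓝 π, g θ < u y := by
      have hlt' := hu.1 _ (hcirc θ₀) _ hlt
      rw [hΩ.nhdsWithin_eq (hcirc θ₀)] at hlt'
      have hcont : ContinuousAt (fun θ => circleMap y r (θ + (θ₀ - π))) π :=
        ((continuous_circleMap y r).comp (continuous_add_const _)).continuousAt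
      exact hcont.eventually (p := fun w => u w < u y) (by simpa using hlt')
    have hmeas : volume.restrict (Ioc 0 (2 * π)) {θ | g θ < u y} ≠ 0 := by
      refine (lt_of_lt_of_le ?_ (Measure.le_restrict_apply _ _)).ne'
      exact Measure.measure_pos_of_mem_nhds _
        (inter_mem hnear (Ioc_mem_nhds pi_pos (by linarith [pi_pos])))
    have hstrict := intervalIntegral.integral_lt_integral_of_ae_le_of_measure_setOfPred_lt_ne_zero
      two_pi_pos.le hg intervalIntegrable_const
      (Eventually.of_forall fun θ => hmax (hcirc _)) hmeas
    rw [intervalIntegral.integral_const, smul_eq_mul, sub_zero] at hstrict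
    linarith [(le_inv_mul_iff₀ two_pi_pos).1 hmean]
  · rw [intervalIntegral.integral_undef hg, mul_zero] at hmean
    linarith

theorem circleMap_dist_arg (y w : ℂ) : circleMap y (dist w y) (arg (w - y)) = w := by
  rw [circleMap, Complex.dist_eq, norm_mul_exp_arg_mul_I, add_sub_cancel]

theorem SubharmonicOn.eq_on_ball_of_isMaxOn {u : ℂ → ℝ} {Ω : Set ℂ} (hΩ : IsOpen Ω)
    (hu : SubharmonicOn u Ω) {y : ℂ} (hy : y ∈ Ω) (hmax : IsMaxOn u Ω y) (hpos : 0 < u y)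
    {r : ℝ} (hball : ball y r ⊆ Ω) {w : ℂ} (hw : w ∈ ball y r) : u w = u y := by
  rcases eq_or_ne w y with rfl | hwy
  · rfl
  rw [← circleMap_dist_arg y w]
  exact hu.eq_of_isMaxOn hΩ hy hmax hpos (dist_pos.2 hwy)
    ((closedBall_subset_ball (mem_ball.1 hw)).trans hball) _

theorem SubharmonicOn.nonpos_of_frontier {u : ℂ → ℝ} {Ω : Set ℂ} (hΩ : IsOpen Ω)
    (hbdd : Bornology.IsBounded Ω) (hu : SubharmonicOn u Ω)
    (hfr : ∀ ζ ∈ frontier Ω, ∀ ε > 0, ∀ᶠ w in 𝓝[Ω] ζ, u w < ε) {z : ℂ} (hz : z ∈ Ω) :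
    u z ≤ 0 := by
  by_contra! hpos
  set v := Ω.indicator u
  have hv_mem : ∀ w ∈ Ω, v w = u w := fun w hw => indicator_of_mem hw u
  have hv_notMem : ∀ w ∉ Ω, v w = 0 := fun w hw => indicator_of_notMem hw u
  have hv : UpperSemicontinuousOn v (closure Ω) :=
    upperSemicontinuousOn_indicator_closure hΩ hu.1 hfr
  obtain ⟨a, ha, hmax⟩ := hv.exists_isMaxOn ⟨z, subset_closure hz⟩ hbdd.isCompact_closure
  have hva : 0 < v a := by
    have hz_le : v z ≤ v a := hmax (subset_closure hz)
    rw [hv_mem z hz] at hz_le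
    linarith
  -- the set where the maximum is attained is clopen, which is absurd for a bounded set
  set M := closure Ω ∩ v ⁻¹' Ici (v a)
  have hMΩ : M ⊆ Ω := fun w hw => by
    by_contra hwΩ
    have hw' : v a ≤ v w := hw.2
    rw [hv_notMem w hwΩ] at hw'
    linarith
  have hMclosed : IsClosed M :=
    (hv.isCompact_inter_preimage_Ici hbdd.isCompact_closure _).isClosed
  have hMopen : IsOpen M := by
    refine Metric.isOpen_iff.2 fun y hyM => ?_
    obtain ⟨r, hr, hballr⟩ := Metric.isOpen_iff.1 hΩ y (hMΩ hyM)
    have hyΩ := hMΩ hyM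
    have hvy : v y = v a := le_antisymm (hmax hyM.1) hyM.2
    have hymax : IsMaxOn u Ω y := fun x hx => by
      have hx_le : v x ≤ v a := hmax (subset_closure hx)
      rwa [hv_mem x hx, ← hvy, hv_mem y hyΩ] at hx_le
    have huy : u y = v a := by rw [← hvy, hv_mem y hyΩ]
    refine ⟨r, hr, fun w hw => ⟨subset_closure (hballr hw), ?_⟩⟩
    rw [mem_preimage, mem_Ici, hv_mem w (hballr hw),
      hu.eq_on_ball_of_isMaxOn hΩ hyΩ hymax (huy ▸ hva) hballr hw, huy]
  have hMuniv : M = univ := IsClopen.eq_univ ⟨hMclosed, hMopen⟩ ⟨a, ha, le_refl (v a)⟩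
  exact NormedSpace.unbounded_univ ℝ ℂ (hbdd.subset (hMuniv ▸ hMΩ))

theorem le_div_rpow_mul_rpow {c δ t β : ℝ} (hc : 0 ≤ c) (hδ : 0 < δ) (hδt : δ ≤ t) (hβ : 0 ≤ β) :
    c ≤ c / δ ^ β * t ^ β := by
  rw [div_mul_eq_mul_div, le_div_iff₀ (by positivity)]
  exact mul_le_mul_of_nonneg_left (rpow_le_rpow hδ.le hδt hβ) hc

theorem eventually_lt_of_norm_eq_one {ψ : ℂ → ℝ} {θ₀ β c : ℝ} (hβ : 0 ≤ β) (hc : 0 ≤ c)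
    (hle : ∀ z ∈ ball (0 : ℂ) 1, ψ z ≤ c)
    (hlim : ∀ θ : ℝ, θ ∈ Ioo (-θ₀) θ₀ →
      limsup ψ (𝓝[ball 0 1] (exp (θ * I))) ≤ c * |θ| ^ β)
    {ζ : ℂ} (hζ : ‖ζ‖ = 1) (hζθ₀ : π / 2 * ‖1 - ζ‖ < θ₀) {ε : ℝ} (hε : 0 < ε) :
    ∀ᶠ w in 𝓝[ball 0 1] ζ, ψ w < c * (π / 2) ^ β * ‖1 - ζ‖ ^ β + ε := by
  have hζexp : exp (arg ζ * I) = ζ := by simpa [hζ] using norm_mul_exp_arg_mul_I ζ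
  have harg : |arg ζ| ≤ π / 2 * ‖1 - ζ‖ := by
    have hjordan := two_div_pi_mul_abs_le_norm_one_sub_exp (abs_arg_le_pi ζ)
    rw [hζexp] at hjordan
    calc |arg ζ| = π / 2 * (2 / π * |arg ζ|) := by field_simp
      _ ≤ π / 2 * ‖1 - ζ‖ := mul_le_mul_of_nonneg_left hjordan (by positivity)
  have hlimζ := hlim (arg ζ) (abs_lt.1 (harg.trans_lt hζθ₀))
  rw [hζexp] at hlimζ
  have hbound : c * |arg ζ| ^ β ≤ c * (π / 2) ^ β * ‖1 - ζ‖ ^ β := by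
    rw [mul_assoc, ← mul_rpow (by positivity) (norm_nonneg _)]
    exact mul_le_mul_of_nonneg_left (rpow_le_rpow (abs_nonneg _) harg hβ) hc
  exact eventually_lt_of_limsup_lt (by linarith)
    ⟨c, eventually_map.2 (eventually_mem_nhdsWithin.mono hle)⟩

theorem eventually_lt_of_mem_frontier {ψ : ℂ → ℝ} {θ₀ β c δ : ℝ} (hβ : 0 ≤ β) (hc : 0 ≤ c)
    (hδ : 0 < δ) (hδθ₀ : π / 2 * δ < θ₀) (hle : ∀ z ∈ ball (0 : ℂ) 1, ψ z ≤ c)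
    (hlim : ∀ θ : ℝ, θ ∈ Ioo (-θ₀) θ₀ →
      limsup ψ (𝓝[ball 0 1] (exp (θ * I))) ≤ c * |θ| ^ β)
    {ζ : ℂ} (hζ : ζ ∈ frontier (ball (0 : ℂ) 1 ∩ ball 1 δ)) {ε : ℝ} (hε : 0 < ε) :
    ∀ᶠ w in 𝓝[ball 0 1] ζ, ψ w < (c * (π / 2) ^ β + c / δ ^ β) * ‖1 - ζ‖ ^ β + ε := by
  rw [(isOpen_ball.inter isOpen_ball).frontier_eq] at hζ
  obtain ⟨hζcl, hζΩ⟩ := hζ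
  obtain ⟨hζ0, hζ1⟩ := (closure_inter_subset_inter_closure _ _).trans
    (inter_subset_inter closure_ball_subset_closedBall closure_ball_subset_closedBall) hζcl
  rw [mem_closedBall_zero_iff] at hζ0
  rw [mem_closedBall_iff_norm'] at hζ1
  have hA : 0 ≤ c * (π / 2) ^ β * ‖1 - ζ‖ ^ β := by positivity
  have hB : 0 ≤ c / δ ^ β * ‖1 - ζ‖ ^ β := by positivity
  rcases hζ0.lt_or_eq with hζ0 | hζ0
  · have hζδ : δ ≤ ‖1 - ζ‖ := by
      by_contra! hlt
      exact hζΩ ⟨mem_ball_zero_iff.2 hζ0, mem_ball_iff_norm'.2 hlt⟩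
    have hc_le := le_div_rpow_mul_rpow hc hδ hζδ hβ
    filter_upwards [eventually_mem_nhdsWithin] with w hw
    nlinarith [hle w hw]
  · have hζθ₀ : π / 2 * ‖1 - ζ‖ < θ₀ :=
      (mul_le_mul_of_nonneg_left hζ1 (by positivity)).trans_lt hδθ₀
    filter_upwards [eventually_lt_of_norm_eq_one hβ hc hle hlim hζ0 hζθ₀ hε] with w hw
    nlinarith

theorem eventually_sub_holderBarrier_lt {ψ : ℂ → ℝ} {β K : ℝ} (hβ₀ : 0 < β) (hβ₂ : β ≤ 2)
    (hK : 0 ≤ K) (hκ : 0 < Real.cos (β * π / 2)) {s : Set ℂ} (hs : s ⊆ ball 0 1) {ζ : ℂ}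
    (hψ : ∀ ε > 0, ∀ᶠ w in 𝓝[s] ζ, ψ w < K * ‖1 - ζ‖ ^ β + ε) {ε : ℝ} (hε : 0 < ε) :
    ∀ᶠ w in 𝓝[s] ζ, ψ w - K / Real.cos (β * π / 2) * holderBarrier β w < ε := by
  have hcont : ContinuousAt (fun w : ℂ => K * ‖1 - w‖ ^ β) ζ := by fun_prop (disch := positivity)
  filter_upwards [hψ (ε / 2) (half_pos hε),
    (hcont.eventually (eventually_gt_nhds (sub_lt_self _ (half_pos hε)))).filter_mono
      nhdsWithin_le_nhds, eventually_mem_nhdsWithin] with w hψw hKw hw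
  have hbarrier := cos_mul_rpow_le_holderBarrier hβ₀.le hβ₂ (hs hw)
  have : K * ‖1 - w‖ ^ β ≤ K / Real.cos (β * π / 2) * holderBarrier β w := by
    rw [div_mul_eq_mul_div, le_div_iff₀ hκ, mul_assoc, mul_comm (‖1 - w‖ ^ β)]
    exact mul_le_mul_of_nonneg_left hbarrier hK
  linarith

theorem le_mul_holderBarrier {ψ : ℂ → ℝ} {θ₀ β c δ : ℝ} (hβ₀ : 0 < β) (hβ₁ : β < 1)
    (hc : 0 ≤ c) (hδ : 0 < δ) (hδθ₀ : π / 2 * δ < θ₀) (hψ : SubharmonicOn ψ (ball 0 1))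
    (hle : ∀ z ∈ ball (0 : ℂ) 1, ψ z ≤ c)
    (hlim : ∀ θ : ℝ, θ ∈ Ioo (-θ₀) θ₀ →
      limsup ψ (𝓝[ball 0 1] (exp (θ * I))) ≤ c * |θ| ^ β)
    {z : ℂ} (hz : z ∈ ball (0 : ℂ) 1 ∩ ball 1 δ) :
    ψ z ≤ (c * (π / 2) ^ β + c / δ ^ β) / Real.cos (β * π / 2) * holderBarrier β z := by
  have hκ : 0 < Real.cos (β * π / 2) :=
    cos_pos_of_mem_Ioo ⟨by nlinarith [pi_pos], by nlinarith [pi_pos]⟩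
  set A := (c * (π / 2) ^ β + c / δ ^ β) / Real.cos (β * π / 2)
  have hu : SubharmonicOn (ψ - fun w => A * holderBarrier β w) (ball 0 1 ∩ ball 1 δ) :=
    (hψ.sub (h := fun w => A * holderBarrier β w)
      (continuousOn_const.mul (continuousOn_holderBarrier β))
      (fun y r hr hball => by rw [circleMean_const_mul, circleMean_holderBarrier β hr hball])
      fun w hw => mul_nonneg (by positivity) (holderBarrier_nonneg hβ₀.le hβ₁.le hw)).mono
      inter_subset_left
  refine sub_nonpos.1 (hu.nonpos_of_frontier (isOpen_ball.inter isOpen_ball)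
    (isBounded_ball.subset inter_subset_left) (fun ζ hζ ε hε => ?_) hz)
  refine eventually_sub_holderBarrier_lt hβ₀ (by linarith) (by positivity) hκ inter_subset_left
    (fun ε' hε' => ?_) hε
  exact (eventually_lt_of_mem_frontier hβ₀.le hc hδ hδθ₀ hle hlim hζ hε').filter_mono
    (nhdsWithin_mono _ inter_subset_left)

/-- If `ψ` is subharmonic on the unit disc, bounded above by `c`, and its boundary
`limsup` at `e^{iθ}` is at most `c|θ|^β` for `θ ∈ (-θ₀, θ₀)`, then
`ψ(z) ≤ C|1-z|^β` with `C` depending only on `(θ₀, β, c)`. -/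
theorem boundary_holder_bound_subharmonic
    (θ₀ β c : ℝ) (hθ : θ₀ ∈ Set.Ioo 0 (π / 6)) (hβ : β ∈ Set.Ioo (0:ℝ) 1) (hc : 0 < c) :
    ∃ C : ℝ, ∀ ψ : ℂ → ℝ, SubharmonicOn ψ (ball 0 1) →
      (∀ z ∈ ball (0:ℂ) 1, ψ z ≤ c) →
      (∀ θ : ℝ, θ ∈ Set.Ioo (-θ₀) θ₀ →
        Filter.limsup ψ (nhdsWithin (Complex.exp (θ * Complex.I)) (ball 0 1))
          ≤ c * |θ| ^ β) →
      ∀ z ∈ ball (0:ℂ) 1, ψ z ≤ C * ‖1 - z‖ ^ β := by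
  obtain ⟨hβ₀, hβ₁⟩ := hβ
  set δ := θ₀ / 2 with hδ_def
  have hδ : 0 < δ := half_pos hθ.1
  have hδθ₀ : π / 2 * δ < θ₀ := by rw [hδ_def]; nlinarith [pi_lt_four, hθ.1]
  set A := (c * (π / 2) ^ β + c / δ ^ β) / Real.cos (β * π / 2)
  have hA : 0 ≤ A :=
    div_nonneg (by positivity)
      (cos_nonneg_of_mem_Icc ⟨by nlinarith [pi_pos], by nlinarith [pi_pos]⟩)
  refine ⟨A + c / δ ^ β, fun ψ hψ hle hlim z hz => ?_⟩
  have hnorm : 0 ≤ ‖1 - z‖ ^ β := by positivity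
  by_cases hzδ : z ∈ ball 1 δ
  · have hψz := le_mul_holderBarrier hβ₀ hβ₁ hc.le hδ hδθ₀ hψ hle hlim ⟨hz, hzδ⟩
    have hbarrier : holderBarrier β z ≤ ‖1 - z‖ ^ β := re_cpow_ofReal_le_rpow (1 - z) β
    nlinarith [div_nonneg hc.le (rpow_nonneg hδ.le β)]
  · rw [mem_ball_iff_norm', not_lt] at hzδ
    have hc_le := le_div_rpow_mul_rpow hc.le hδ hzδ hβ₀.le
    nlinarith [hle z hz]
end
end

section
/- Let (φ_k)_k be a sequence of continuous functions on a compact metric space X converging pointwise to a continuous function φ, with φ_k ≤ φ for all k, and satisfying k φ_k + m φ_m ≤ (k+m) φ_{k+m} for all k, m ≥ 1. Then φ_k converges uniformly to φ on X. -/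
open Filter Topology

/- `b n := n φ_n(x)` is superadditive, so writing `n = q k + r` with `r < k` gives
`n φ_n ≥ q k φ_k + r φ_r`, i.e. `φ_n ≥ φ_k - 2 M k / n` uniformly in `x`, where `M` bounds
`|φ_j|` for `1 ≤ j ≤ k`. Given `x` and `ε`, pick `k` with `φ_k > φ - ε` at `x`, hence near `x`;
then `φ - 2ε < φ_n ≤ φ` near `x` for all large `n`, and compactness makes this uniform. -/

theorem subadditive_neg_mul_of_superadditive {a : ℕ → ℝ}
    (hsuper : ∀ k m : ℕ, 1 ≤ k → 1 ≤ m → (k : ℝ) * a k + m * a m ≤ ((k : ℝ) + m) * a (k + m)) :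
    Subadditive fun n => -(n * a n) := by
  intro k m
  rcases Nat.eq_zero_or_pos k with rfl | hk
  · simp
  rcases Nat.eq_zero_or_pos m with rfl | hm
  · simp
  have := hsuper k m hk hm
  push_cast
  linarith

theorem Subadditive.mul_sub_le_of_abs_le {a : ℕ → ℝ} (h : Subadditive fun n => -(n * a n))
    {k : ℕ} (hk : 0 < k) {M : ℝ} (hM : ∀ j, 0 < j → j ≤ k → |a j| ≤ M) (n : ℕ) :
    n * (a k - a n) ≤ 2 * M * k := by
  set q := n / k
  set r := n % k
  have hqkr : q * k + r = n := Nat.div_add_mod' n k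
  have hn : (n : ℝ) = q * k + r := by exact_mod_cast hqkr.symm
  have hrk : (r : ℝ) ≤ k := by exact_mod_cast (Nat.mod_lt n hk).le
  have hM0 : 0 ≤ M := (abs_nonneg _).trans (hM k hk le_rfl)
  have hqr : -(n * a n) ≤ q * -(k * a k) + -(r * a r) := by
    simpa only [hqkr] using h.apply_mul_add_le q k r
  have hr : r * (a k - a r) ≤ r * (2 * M) := by
    rcases Nat.eq_zero_or_pos r with hr0 | hr0
    · simp [hr0]
    have hak := abs_le.1 (hM k hk le_rfl)
    have har := abs_le.1 (hM r hr0 (Nat.mod_lt n hk).le)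
    exact mul_le_mul_of_nonneg_left (by linarith) (Nat.cast_nonneg r)
  calc (n : ℝ) * (a k - a n) ≤ r * (a k - a r) := by rw [hn] at hqr ⊢; linarith
    _ ≤ r * (2 * M) := hr
    _ ≤ k * (2 * M) := by gcongr
    _ = 2 * M * k := mul_comm _ _

theorem exists_forall_abs_le_of_continuous {X : Type*} [TopologicalSpace X] [CompactSpace X]
    {φ : ℕ → X → ℝ} (hcont : ∀ k, 1 ≤ k → Continuous (φ k)) (k : ℕ) :
    ∃ M, ∀ j, 0 < j → j ≤ k → ∀ x, |φ j x| ≤ M := by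
  have hbdd : BddAbove (⋃ j ∈ Set.Icc 1 k, Set.range fun x => |φ j x|) :=
    (Set.finite_Icc 1 k).bddAbove_biUnion.2 fun j hj =>
      (isCompact_range (hcont j hj.1).abs).bddAbove
  obtain ⟨M, hM⟩ := hbdd
  exact ⟨M, fun j hj hjk x => hM (Set.mem_biUnion ⟨hj, hjk⟩ ⟨x, rfl⟩)⟩

theorem eventually_forall_sub_le_of_subadditive {X : Type*} [TopologicalSpace X] [CompactSpace X]
    {φ : ℕ → X → ℝ} (hcont : ∀ k, 1 ≤ k → Continuous (φ k))
    (hsub : ∀ x, Subadditive fun n => -(n * φ n x)) {k : ℕ} (hk : 0 < k) {ε : ℝ} (hε : 0 < ε) :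
    ∀ᶠ n in atTop, ∀ x, φ k x - ε ≤ φ n x := by
  obtain ⟨M, hM⟩ := exists_forall_abs_le_of_continuous hcont k
  have hsmall : ∀ᶠ n : ℕ in atTop, 2 * M * k / n < ε :=
    (tendsto_const_div_atTop_nhds_zero_nat _).eventually_lt_const hε
  filter_upwards [hsmall, eventually_gt_atTop 0] with n hn hn0 x
  have hbound := (hsub x).mul_sub_le_of_abs_le hk (fun j hj hjk => hM j hj hjk x) n
  rw [← le_div_iff₀' (by exact_mod_cast hn0)] at hbound
  linarith

theorem tendstoLocallyUniformly_of_eventually_sub_le {ι X : Type*} [TopologicalSpace X]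
    {p : Filter ι} [p.NeBot] {F : ι → X → ℝ} {f : X → ℝ}
    (hF : ∀ᶠ k in p, Continuous (F k)) (hf : Continuous f)
    (hlim : ∀ x, Tendsto (fun k => F k x) p (𝓝 (f x))) (hle : ∀ᶠ n in p, ∀ x, F n x ≤ f x)
    (hlow : ∀ᶠ k in p, ∀ ε > 0, ∀ᶠ n in p, ∀ x, F k x - ε ≤ F n x) :
    TendstoLocallyUniformly F f p := by
  rw [Metric.tendstoLocallyUniformly_iff]
  intro ε hε x
  have hnear : ∀ᶠ k in p, f x - ε / 2 < F k x :=
    (hlim x).eventually_const_lt (by linarith)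
  obtain ⟨k, hkc, hklow, hkx⟩ := (hF.and (hlow.and hnear)).exists
  refine ⟨{y | f y - ε / 2 < F k y}, (isOpen_lt (hf.sub continuous_const) hkc).mem_nhds hkx, ?_⟩
  filter_upwards [hle, hklow (ε / 2) (half_pos hε)] with n hn hkn y hy
  rw [Real.dist_eq, abs_of_nonneg (sub_nonneg.2 (hn y))]
  linarith [hkn y, show f y - ε / 2 < F k y from hy]

/-- Dini/Fekete-type lemma: if continuous functions `φ_k` on a compact metric space
converge pointwise to a continuous `φ`, satisfy `φ_k ≤ φ`, and the superadditivity
`k φ_k + m φ_m ≤ (k+m) φ_{k+m}`, then the convergence is uniform. -/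
theorem uniform_convergence_of_superadditive {X : Type*} [MetricSpace X] [CompactSpace X]
    (φ : ℕ → X → ℝ) (φlim : X → ℝ)
    (hcont : ∀ k : ℕ, 1 ≤ k → Continuous (φ k)) (hlimc : Continuous φlim)
    (hptw : ∀ x, Tendsto (fun k : ℕ => φ k x) atTop (nhds (φlim x)))
    (hle : ∀ k : ℕ, 1 ≤ k → ∀ x, φ k x ≤ φlim x)
    (hsuper : ∀ k m : ℕ, 1 ≤ k → 1 ≤ m → ∀ x,
      (k : ℝ) * φ k x + (m : ℝ) * φ m x ≤ ((k : ℝ) + m) * φ (k + m) x) :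
    TendstoUniformly φ φlim atTop := by
  have hsub : ∀ x, Subadditive fun n => -(n * φ n x) := fun x =>
    subadditive_neg_mul_of_superadditive fun k m hk hm => hsuper k m hk hm x
  refine tendstoLocallyUniformly_iff_tendstoUniformly_of_compactSpace.1
    (tendstoLocallyUniformly_of_eventually_sub_le ?_ hlimc hptw ?_ ?_)
  · filter_upwards [eventually_ge_atTop 1] with k hk using hcont k hk
  · filter_upwards [eventually_ge_atTop 1] with n hn using hle n hn
  · filter_upwards [eventually_ge_atTop 1] with k hk ε hε
    exact eventually_forall_sub_le_of_subadditive hcont hsub hk hε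
end
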